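/- arXiv:2511.21628 — 2 statements merged into one kernel-verified Lean document; each statement's English description precedes it below -/
import Mathlib

section
/- Let s,ℓ,c be positive integers with c+ℓ=s and n=3s-ℓ=2ℓ+3c. Let F ⊆ 2^[n] be a shifted family with ν(F) < s. Suppose d(F) ≥ d where d ∈ [2, c+1] is an even integer. Let X ⊆ [2ℓ+d−1] be a set such that for every x ∈ X the family F ∩ (([2ℓ+d−1] \ {x}) choose 2) contains an (ℓ+(d−2)/2)-matching. If ν(F ∩ ([2ℓ+d, n] choose 3)) ≥ c−d+1, then y_F(3) ≥ |X|·C(2d−2, 2)·(1 − (2ℓ+d−2)(d−2)/((d−2)|X|+2ℓ)). -/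
open Finset

/-- The ground set `[n] = {1, 2, …, n}`. -/
def ground (n : ℕ) : Finset ℕ := Finset.Icc 1 n

-- The matching number `ν(F)` of a family: the size of the largest pairwise
-- disjoint subfamily of `F`.
open Classical in
noncomputable def matchingNumber (F : Finset (Finset ℕ)) : ℕ :=
  (F.powerset.filter fun M : Finset (Finset ℕ) =>
      (M : Set (Finset ℕ)).Pairwise fun A B => Disjoint A B).sup Finset.card

-- `e(n, s)`: the maximum size of a family `F ⊆ 2^[n]` with `ν(F) < s`.
open Classical in
noncomputable def extremalNumber (n s : ℕ) : ℕ :=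
  (((ground n).powerset.powerset).filter fun F => matchingNumber F < s).sup Finset.card

/-- The family `P(s, ℓ) = {P ⊆ [n] : |P| + |P ∩ [ℓ-1]| ≥ 3}` (it depends only on `n, ℓ`). -/
def famP (n l : ℕ) : Finset (Finset ℕ) :=
  (ground n).powerset.filter fun A => 3 ≤ A.card + (A ∩ Finset.Icc 1 (l - 1)).card

/-- The family `P'(s, ℓ)`: all subsets of `[n]` of size at least `3` together with
all `2`-element subsets of `[2ℓ-1]`. -/
def famP' (n l : ℕ) : Finset (Finset ℕ) :=
  ((ground n).powerset.filter fun A => 3 ≤ A.card) ∪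
    (Finset.Icc 1 (2 * l - 1)).powersetCard 2

/-- The family `Q(s, ℓ)`: all subsets of `[n]` of size at least `3` together with all
`2`-element subsets of `[s+ℓ-1]`, with all `3`-element subsets of `[s+ℓ, n]` removed. -/
def famQ (n s l : ℕ) : Finset (Finset ℕ) :=
  (((ground n).powerset.filter fun A => 3 ≤ A.card) ∪
      (Finset.Icc 1 (s + l - 1)).powersetCard 2) \
    (Finset.Icc (s + l) n).powersetCard 3

/-- The family `W(s, ℓ) = {P ⊆ [n] : |P ∩ [2s-1]| ≥ 2}`. -/
def famW (n s : ℕ) : Finset (Finset ℕ) :=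
  (ground n).powerset.filter fun A => 2 ≤ (A ∩ Finset.Icc 1 (2 * s - 1)).card

/-- The `(i ← j)`-shift of a set. -/
def shiftSet (i j : ℕ) (A : Finset ℕ) : Finset ℕ :=
  if j ∈ A ∧ i ∉ A then insert i (A.erase j) else A

/-- The `(i ← j)`-shift of a family. -/
def shiftFam (i j : ℕ) (F : Finset (Finset ℕ)) : Finset (Finset ℕ) :=
  F.image (shiftSet i j) ∪ F.filter fun A => shiftSet i j A ∈ F

/-- A family `F ⊆ 2^[n]` is shifted if it is invariant under all `(i ← j)`-shifts
with `1 ≤ i < j ≤ n`. -/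
def IsShifted (n : ℕ) (F : Finset (Finset ℕ)) : Prop :=
  ∀ i j : ℕ, 1 ≤ i → i < j → j ≤ n → shiftFam i j F = F

/-- `A` can be shifted to `B`: some sequence of `(a ← b)`-shifts with `a < b`
transforms `A` into `B`. -/
def ShiftsTo (n : ℕ) (A B : Finset ℕ) : Prop :=
  Relation.ReflTransGen
    (fun X Y => ∃ a b : ℕ, 1 ≤ a ∧ a < b ∧ b ≤ n ∧ Y = shiftSet a b X) A B

/-- A family `F ⊆ 2^[n]` is an up-set if it is closed under supersets inside `[n]`. -/
def IsUpSet (n : ℕ) (F : Finset (Finset ℕ)) : Prop :=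
  ∀ A ∈ F, ∀ B : Finset ℕ, A ⊆ B → B ⊆ ground n → B ∈ F

/-- The `k`-th layer of a family: its `k`-element members (as subsets of `[n]`). -/
def layer (n : ℕ) (F : Finset (Finset ℕ)) (k : ℕ) : Finset (Finset ℕ) :=
  F ∩ (ground n).powersetCard k

/-- `y_F(k)`: the number of `k`-element subsets of `[n]` that do not belong to `F`. -/
def yF (n : ℕ) (F : Finset (Finset ℕ)) (k : ℕ) : ℕ :=
  Nat.choose n k - (layer n F k).card

/-- The defining condition for `d(F)` (with parameter `ℓ`). -/
def DCond (l : ℕ) (F : Finset (Finset ℕ)) (d : ℕ) : Prop :=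
  (Even d ∧ ∃ i ∈ Finset.Icc 1 (l + d / 2), ({i, 2 * l + d + 1 - i} : Finset ℕ) ∉ F) ∨
  (Odd d ∧ (({1, 2 * l + d} : Finset ℕ) ∉ F ∨
    ∃ i ∈ Finset.Icc 3 (l + (d + 1) / 2), ({i, 2 * l + d + 2 - i} : Finset ℕ) ∉ F))

/-- `d(F)`: the smallest `d ≥ 0` satisfying the condition `DCond ℓ F d`. -/
noncomputable def dF (l : ℕ) (F : Finset (Finset ℕ)) : ℕ := sInf {d : ℕ | DCond l F d}

/-!
Fix a matching `Mt` of `c + 1 - d` triples in `[2ℓ+d, n]`; the `2d - 2` uncovered points form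
the set `T`, and `Lo = [2ℓ+d-1]`. For `x ∈ X` let `Mx` be an `(ℓ + h)`-matching of pairs
covering `Lo \ {x}`, where `d = 2h + 2`. If `{x} ∪ Q ∈ F` for a pair `Q ⊆ T`, then for every
perfect matching `P` of `T \ Q` and every `h` pairs of `Mx` covering a set `W`, the bipartite graph
"`{w} ∪ p ∈ F`" between `P` and `W` has no perfect matching: otherwise these `2h` triples,
the other `ℓ` pairs of `Mx`, `Mt` and `{x} ∪ Q` form an `s`-matching in `F`. By Hall's theorem
each such `(W, P)` therefore carries at least `2h` missing triples. Averaging over the choice of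
the `h` pairs and over a `1`-factorization of `T \ Q` gives at least `(4h - 1)(2ℓ + 2h)` missing
triples `{y} ∪ p` with `y ∈ Lo \ {x}` and `p ⊆ T \ Q`; double counting over the pairs `Q` and
summing over `x ∈ X` yields the bound.
-/

section Matchings

variable {α : Type*}

def IsMatchingIn (M : Finset (Finset α)) (S : Finset α) : Prop :=
  (M : Set (Finset α)).PairwiseDisjoint id ∧ ∀ A ∈ M, A.Nonempty ∧ A ⊆ S

namespace IsMatchingIn

variable {M N : Finset (Finset α)} {S S' : Finset α}

theorem mono (hM : IsMatchingIn M S) (hS : S ⊆ S') : IsMatchingIn M S' :=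
  ⟨hM.1, fun A hA => ⟨(hM.2 A hA).1, (hM.2 A hA).2.trans hS⟩⟩

theorem forall_disjoint (hM : IsMatchingIn M S) (hN : IsMatchingIn N S') (h : Disjoint S S') :
    ∀ A ∈ M, ∀ B ∈ N, Disjoint A B := fun A hA B hB =>
  h.mono (hM.2 A hA).2 (hN.2 B hB).2

theorem subset (hM : IsMatchingIn M S) (hNM : N ⊆ M) : IsMatchingIn N S :=
  ⟨hM.1.subset (Finset.coe_subset.2 hNM), fun A hA => hM.2 A (hNM hA)⟩

theorem singleton {A : Finset α} (hA : A.Nonempty) : IsMatchingIn {A} A :=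
  ⟨by simp, by simpa using hA⟩

variable [DecidableEq α]

theorem biUnion_subset (hM : IsMatchingIn M S) : M.biUnion id ⊆ S :=
  Finset.biUnion_subset.2 fun A hA => (hM.2 A hA).2

theorem self_biUnion (hM : IsMatchingIn M S) : IsMatchingIn M (M.biUnion id) :=
  ⟨hM.1, fun A hA => ⟨(hM.2 A hA).1, Finset.subset_biUnion_of_mem id hA⟩⟩

theorem card_biUnion {k : ℕ} (hM : IsMatchingIn M S) (hk : ∀ A ∈ M, A.card = k) :
    (M.biUnion id).card = k * M.card := by
  rw [Finset.card_biUnion hM.1, Finset.sum_congr rfl fun A hA => (hk A hA : (id A).card = k),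
    Finset.sum_const, smul_eq_mul, mul_comm]

theorem sum_card_filter (hM : IsMatchingIn M S) (r : α → Prop) [DecidablePred r] :
    ∑ A ∈ M, (A.filter r).card = ((M.biUnion id).filter r).card := by
  rw [Finset.filter_biUnion, Finset.card_biUnion]
  · rfl
  · exact fun A hA B hB hAB => Finset.disjoint_filter_filter (hM.1 hA hB hAB)

theorem union (hM : IsMatchingIn M S) (hN : IsMatchingIn N S') (h : Disjoint S S') :
    IsMatchingIn (M ∪ N) (S ∪ S') := by
  refine ⟨?_, fun A hA => ?_⟩
  · rw [Finset.coe_union, Set.pairwiseDisjoint_union]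
    exact ⟨hM.1, hN.1, fun A hA B hB _ => hM.forall_disjoint hN h A hA B hB⟩
  · rcases Finset.mem_union.1 hA with hA | hA
    · exact ⟨(hM.2 A hA).1, (hM.2 A hA).2.trans Finset.subset_union_left⟩
    · exact ⟨(hN.2 A hA).1, (hN.2 A hA).2.trans Finset.subset_union_right⟩

theorem card_union (hM : IsMatchingIn M S) (hN : IsMatchingIn N S') (h : Disjoint S S') :
    (M ∪ N).card = M.card + N.card := by
  refine Finset.card_union_of_disjoint (Finset.disjoint_left.2 fun A hAM hAN => ?_)
  obtain ⟨a, ha⟩ := (hM.2 A hAM).1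
  exact Finset.disjoint_left.1 (hM.forall_disjoint hN h A hAM A hAN) ha ha

theorem sdiff (hM : IsMatchingIn M S) {R : Finset (Finset α)} (hR : R ⊆ M) :
    IsMatchingIn (M \ R) (S \ R.biUnion id) := by
  refine ⟨hM.1.subset (by simp), fun A hA => ?_⟩
  obtain ⟨hAM, hAR⟩ := Finset.mem_sdiff.1 hA
  refine ⟨(hM.2 A hAM).1, Finset.subset_sdiff.2 ⟨(hM.2 A hAM).2, ?_⟩⟩
  refine (Finset.disjoint_biUnion_right _ _ _).2 fun B hB => hM.1 hAM (hR hB) ?_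
  rintro rfl
  exact hAR hB

variable {P : Finset (Finset α)} {U W : Finset α} {σ : Finset α → α}

theorem disjoint_insert_of_ne (hP : IsMatchingIn P U) (hσ : Set.InjOn σ P)
    (hσW : ∀ p ∈ P, σ p ∈ W) (hWU : Disjoint W U) {p p' : Finset α} (hp : p ∈ P) (hp' : p' ∈ P)
    (hne : p ≠ p') : Disjoint (insert (σ p) p) (insert (σ p') p') := by
  have hnot : ∀ q ∈ P, ∀ q' ∈ P, σ q ∉ q' := fun q hq q' hq' hmem =>
    Finset.disjoint_left.1 hWU (hσW q hq) ((hP.2 q' hq').2 hmem)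
  simp only [Finset.disjoint_insert_left, Finset.disjoint_insert_right, Finset.mem_insert,
    not_or]
  exact ⟨⟨fun h => hne (hσ hp hp' h.symm), hnot p' hp' p hp⟩, hnot p hp p' hp', hP.1 hp hp' hne⟩

theorem image_insert (hP : IsMatchingIn P U) (hσ : Set.InjOn σ P) (hσW : ∀ p ∈ P, σ p ∈ W)
    (hWU : Disjoint W U) : IsMatchingIn (P.image fun p => insert (σ p) p) (W ∪ U) := by
  refine ⟨?_, ?_⟩
  · rintro _ hA _ hB hne
    obtain ⟨p, hp, rfl⟩ := Finset.mem_image.1 hA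
    obtain ⟨p', hp', rfl⟩ := Finset.mem_image.1 hB
    exact hP.disjoint_insert_of_ne hσ hσW hWU hp hp' fun h => hne (h ▸ rfl)
  · simp only [Finset.mem_image, forall_exists_index, and_imp, forall_apply_eq_imp_iff₂]
    exact fun p hp => ⟨Finset.insert_nonempty _ _,
      Finset.insert_subset (Finset.mem_union_left _ (hσW p hp))
        ((hP.2 p hp).2.trans Finset.subset_union_right)⟩

theorem card_image_insert (hP : IsMatchingIn P U) (hσ : Set.InjOn σ P) (hσW : ∀ p ∈ P, σ p ∈ W)
    (hWU : Disjoint W U) : (P.image fun p => insert (σ p) p).card = P.card := by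
  refine Finset.card_image_of_injOn fun p hp p' hp' h => ?_
  by_contra hne
  have := hP.disjoint_insert_of_ne hσ hσW hWU hp hp' hne
  rw [h, disjoint_self, Finset.bot_eq_empty] at this
  exact Finset.insert_ne_empty _ _ this

end IsMatchingIn

end Matchings

theorem card_le_matchingNumber {G M : Finset (Finset ℕ)} (hMG : M ⊆ G)
    (hM : (M : Set (Finset ℕ)).PairwiseDisjoint id) : M.card ≤ matchingNumber G := by
  classical
  exact Finset.le_sup (Finset.mem_filter.2 ⟨Finset.mem_powerset.2 hMG, hM⟩)

theorem exists_matching_card_eq {G : Finset (Finset ℕ)} {k : ℕ} (hk : k ≤ matchingNumber G) :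
    ∃ M ⊆ G, (M : Set (Finset ℕ)).PairwiseDisjoint id ∧ M.card = k := by
  classical
  rcases k.eq_zero_or_pos with rfl | hk0
  · exact ⟨∅, Finset.empty_subset _, by simp, rfl⟩
  obtain ⟨M₀, hM₀, hkM₀⟩ := (Finset.le_sup_iff hk0).1 hk
  rw [Finset.mem_filter, Finset.mem_powerset] at hM₀
  obtain ⟨M, hMM₀, hM⟩ := Finset.exists_subset_card_eq hkM₀
  exact ⟨M, hMM₀.trans hM₀.1, hM₀.2.mono hMM₀, hM⟩

theorem exists_isMatchingIn_of_le_matchingNumber {F : Finset (Finset ℕ)} {S : Finset ℕ}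
    {j k : ℕ} (hk : 0 < k) (h : j ≤ matchingNumber (F ∩ S.powersetCard k)) :
    ∃ M ⊆ F, IsMatchingIn M S ∧ (∀ A ∈ M, A.card = k) ∧ M.card = j := by
  obtain ⟨M, hMG, hM, rfl⟩ := exists_matching_card_eq h
  have hmem : ∀ A ∈ M, A ∈ F ∧ A ⊆ S ∧ A.card = k := fun A hA => by
    simpa [Finset.mem_powersetCard] using hMG hA
  refine ⟨M, fun A hA => (hmem A hA).1, ⟨hM, fun A hA => ⟨?_, (hmem A hA).2.1⟩⟩,
    fun A hA => (hmem A hA).2.2, rfl⟩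
  exact Finset.card_pos.1 ((hmem A hA).2.2 ▸ hk)

/-- The matching `(Mx \ R) ∪ Mt ∪ {{σ p} ∪ p | p ∈ P} ∪ {{x} ∪ Q}` of `F`. -/
theorem card_add_le_matchingNumber {F : Finset (Finset ℕ)} {Lo V T Q : Finset ℕ} {x : ℕ}
    {Mx R Mt P : Finset (Finset ℕ)} {σ : Finset ℕ → ℕ}
    (hLoV : Disjoint Lo V) (hLoT : Disjoint Lo T) (hVT : Disjoint V T) (hx : x ∈ Lo)
    (hMx : IsMatchingIn Mx (Lo.erase x)) (hMxF : Mx ⊆ F) (hR : R ⊆ Mx)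
    (hMt : IsMatchingIn Mt V) (hMtF : Mt ⊆ F) (hQT : Q ⊆ T) (hQF : insert x Q ∈ F)
    (hP : IsMatchingIn P (T \ Q)) (hσ : Set.InjOn σ P) (hσR : ∀ p ∈ P, σ p ∈ R.biUnion id)
    (hσF : ∀ p ∈ P, insert (σ p) p ∈ F) :
    Mx.card + Mt.card + P.card + 1 ≤ matchingNumber F + R.card := by
  set W := R.biUnion id
  have hW : W ⊆ Lo.erase x := (Finset.biUnion_subset_biUnion_of_subset_left _ hR).trans
    hMx.biUnion_subset
  have hWT : Disjoint W (T \ Q) :=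
    hLoT.mono (hW.trans (Finset.erase_subset _ _)) Finset.sdiff_subset
  have hW' : ∀ a ∈ W, a ≠ x ∧ a ∈ Lo := fun a ha => Finset.mem_erase.1 (hW ha)
  have hLoV' : ∀ a ∈ Lo, a ∉ V := Finset.disjoint_left.1 hLoV
  have hLoT' : ∀ a ∈ Lo, a ∉ T := Finset.disjoint_left.1 hLoT
  have hVT' : ∀ a ∈ V, a ∉ T := Finset.disjoint_left.1 hVT
  have hd₁ : Disjoint (Lo.erase x \ W) V := Finset.disjoint_left.2 fun a h₁ h₂ => by
    simp only [Finset.mem_sdiff, Finset.mem_erase] at h₁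
    grind
  have hd₂ : Disjoint (W ∪ T \ Q) (insert x Q) := Finset.disjoint_left.2 fun a h₁ h₂ => by
    simp only [Finset.mem_union, Finset.mem_sdiff, Finset.mem_insert] at h₁ h₂
    grind
  have hd₃ : Disjoint (Lo.erase x \ W ∪ V) (W ∪ T \ Q ∪ insert x Q) :=
    Finset.disjoint_left.2 fun a h₁ h₂ => by
      simp only [Finset.mem_union, Finset.mem_sdiff, Finset.mem_erase, Finset.mem_insert] at h₁ h₂
      grind
  have hsplit := (hMx.sdiff hR).union hMt hd₁
  have hmixed := (hP.image_insert hσ hσR hWT).union (.singleton (Finset.insert_nonempty x Q)) hd₂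
  have hcard := card_le_matchingNumber (G := F) ?_ (hsplit.union hmixed hd₃).1
  · rw [hsplit.card_union hmixed hd₃, (hMx.sdiff hR).card_union hMt hd₁,
      (hP.image_insert hσ hσR hWT).card_union (.singleton (Finset.insert_nonempty x Q)) hd₂,
      hP.card_image_insert hσ hσR hWT, Finset.card_sdiff_of_subset hR, Finset.card_singleton]
      at hcard
    have := Finset.card_le_card hR
    omega
  · simp only [Finset.union_subset_iff, Finset.singleton_subset_iff, Finset.image_subset_iff]
    exact ⟨⟨Finset.sdiff_subset.trans hMxF, hMtF⟩, hσF, hQF⟩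

theorem Finset.exists_subset_card_eq_sum_mul_le {ι : Type*} [DecidableEq ι] (s : Finset ι)
    (f : ι → ℕ) {h : ℕ} (hhs : h ≤ s.card) :
    ∃ R ⊆ s, R.card = h ∧ (∑ i ∈ R, f i) * s.card ≤ (∑ i ∈ s, f i) * h := by
  obtain ⟨k, hk⟩ := Nat.exists_eq_add_of_le hhs
  induction k generalizing s with
  | zero => exact ⟨s, subset_rfl, hk, by rw [hk, add_zero]⟩
  | succ k ih =>
    obtain ⟨a, ha, hmax⟩ := s.exists_max_image f (Finset.card_pos.1 (by omega))
    have hcard : (s.erase a).card = h + k := by rw [Finset.card_erase_of_mem ha]; omega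
    obtain ⟨R, hRs, hR, hRsum⟩ := ih (s.erase a) (by omega) hcard
    refine ⟨R, hRs.trans (Finset.erase_subset _ _), hR, ?_⟩
    have hsum := Finset.sum_erase_add s f ha
    have hle : ∑ i ∈ s.erase a, f i ≤ (s.erase a).card * f a := by
      simpa using Finset.sum_le_card_nsmul _ _ _ fun i hi => hmax i (Finset.mem_of_mem_erase hi)
    rcases Nat.eq_zero_or_pos (s.erase a).card with h0 | hpos
    · obtain rfl : R = ∅ := Finset.card_eq_zero.1 (by omega)
      simp
    · rw [← hsum, show s.card = (s.erase a).card + 1 by omega]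
      nlinarith

theorem exists_injOn_of_sum_card_filter_not_lt {α β : Type*} [DecidableEq β]
    (r : α → β → Prop) [∀ a b, Decidable (r a b)] {s : Finset α} {t : Finset β}
    (hst : s.card ≤ t.card) (h : ∑ a ∈ s, (t.filter fun b => ¬ r a b).card < t.card) :
    ∃ f : α → β, Set.InjOn f s ∧ ∀ a ∈ s, f a ∈ t ∧ r a (f a) := by
  classical
  have hall : ∀ S : Finset s, S.card ≤ (S.biUnion fun a => t.filter (r a)).card := by
    intro S
    set N := S.biUnion fun a => t.filter (r a)
    by_contra! hlt
    have hsub : ∀ a ∈ S, t \ N ⊆ t.filter fun b => ¬ r a b := fun a ha b hb => by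
      simp only [Finset.mem_sdiff, N, Finset.mem_biUnion, Finset.mem_filter, not_exists,
        not_and] at hb ⊢
      exact ⟨hb.1, hb.2 a ha hb.1⟩
    have hbound : S.card * (t.card - N.card) ≤ ∑ a ∈ s, (t.filter fun b => ¬ r a b).card :=
      calc S.card * (t.card - N.card)
          = ∑ _a ∈ S, (t \ N).card := by
            rw [Finset.sum_const, smul_eq_mul, Finset.card_sdiff_of_subset
              (Finset.biUnion_subset.2 fun _ _ => Finset.filter_subset _ _)]
        _ ≤ ∑ a ∈ S, (t.filter fun b => ¬ r a b).card :=
            Finset.sum_le_sum fun a ha => Finset.card_le_card (hsub a ha)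
        _ ≤ ∑ a : s, (t.filter fun b => ¬ r a b).card :=
            Finset.sum_le_sum_of_subset (Finset.subset_univ S)
        _ = ∑ a ∈ s, (t.filter fun b => ¬ r a b).card :=
            Finset.sum_coe_sort s fun a => (t.filter fun b => ¬ r a b).card
    have hSs : S.card ≤ s.card := by simpa using Finset.card_le_univ S
    have hNt : N.card ≤ t.card := Finset.card_le_card (Finset.biUnion_subset.2 fun _ _ =>
      Finset.filter_subset _ _)
    zify [hNt] at hbound
    -- `k (|t| - |N|) ≥ k (|t| - k + 1) ≥ |t|` for `1 ≤ k = |S| ≤ |t|`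
    nlinarith [mul_nonneg (by omega : (0 : ℤ) ≤ S.card - 1) (by omega : (0 : ℤ) ≤ t.card - S.card),
      mul_le_mul_of_nonneg_left (by omega : (t.card - S.card + 1 : ℤ) ≤ t.card - N.card)
        (by positivity : (0 : ℤ) ≤ S.card)]
  obtain ⟨f, hf, hft⟩ := (Finset.all_card_le_biUnion_card_iff_exists_injective _).1 hall
  obtain ⟨b₀, -⟩ := Finset.card_pos.1 (Nat.zero_lt_of_lt h)
  refine ⟨fun a => if ha : a ∈ s then f ⟨a, ha⟩ else b₀, fun a ha a' ha' heq => ?_,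
    fun a ha => ?_⟩
  · simp only [Finset.mem_coe] at ha ha'
    simp only [dif_pos ha, dif_pos ha'] at heq
    exact congrArg Subtype.val (hf heq)
  · simpa [dif_pos ha] using hft ⟨a, ha⟩

section InvolutionPairs

variable {α β : Type*} [DecidableEq α]

def involutionPairs [Fintype β] (e : β ↪ α) (τ : β → β) : Finset (Finset α) :=
  Finset.univ.image fun v => {e v, e (τ v)}

theorem mem_pair_embedding_iff (e : β ↪ α) {τ : β → β} {v w : β} :
    e w ∈ ({e v, e (τ v)} : Finset α) ↔ w = v ∨ w = τ v := by
  simp [e.injective.eq_iff]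

theorem pair_embedding_eq_iff (e : β ↪ α) {τ : β → β} (hτ : Function.Involutive τ) {v w : β} :
    ({e w, e (τ w)} : Finset α) = {e v, e (τ v)} ↔ w = v ∨ w = τ v := by
  refine ⟨fun h => (mem_pair_embedding_iff e).1 (h ▸ Finset.mem_insert_self _ _), ?_⟩
  rintro (rfl | rfl)
  · rfl
  · rw [hτ v, Finset.pair_comm]

variable [Fintype β] {e : β ↪ α} {τ : β → β}

theorem isMatchingIn_involutionPairs (hτ : Function.Involutive τ) :
    IsMatchingIn (involutionPairs e τ) (Finset.univ.map e) := by
  refine ⟨?_, ?_⟩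
  · simp only [involutionPairs, Finset.coe_image, Finset.coe_univ, Set.image_univ]
    rintro _ ⟨v, rfl⟩ _ ⟨w, rfl⟩ hne
    refine Finset.disjoint_left.2 fun a ha hb => hne ?_
    rw [id, Finset.mem_insert, Finset.mem_singleton] at ha
    rw [id] at hb
    rcases ha with rfl | rfl
    · exact (pair_embedding_eq_iff e hτ).2 ((mem_pair_embedding_iff e).1 hb)
    · refine (pair_embedding_eq_iff e hτ).2 ?_
      rcases (mem_pair_embedding_iff e).1 hb with hb | hb
      · exact Or.inr (by rw [← hb, hτ])
      · exact Or.inl (hτ.injective hb)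
  · simp only [involutionPairs, Finset.mem_image, Finset.mem_univ, true_and,
      forall_exists_index, forall_apply_eq_imp_iff]
    exact fun v => ⟨Finset.insert_nonempty _ _, by simp [Finset.insert_subset_iff]⟩

theorem card_eq_two_of_mem_involutionPairs (hfix : ∀ v, τ v ≠ v) {p : Finset α}
    (hp : p ∈ involutionPairs e τ) : p.card = 2 := by
  obtain ⟨v, -, rfl⟩ := Finset.mem_image.1 hp
  exact Finset.card_pair (e.injective.ne (hfix v).symm)

theorem two_mul_card_involutionPairs (hτ : Function.Involutive τ) (hfix : ∀ v, τ v ≠ v) :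
    2 * (involutionPairs e τ).card = Fintype.card β := by
  have hM := isMatchingIn_involutionPairs (e := e) hτ
  have hcover : (involutionPairs e τ).biUnion id = Finset.univ.map e := by
    refine (hM.biUnion_subset).antisymm fun a ha => ?_
    obtain ⟨v, -, rfl⟩ := Finset.mem_map.1 ha
    exact Finset.mem_biUnion.2 ⟨_, Finset.mem_image_of_mem _ (Finset.mem_univ v),
      Finset.mem_insert_self _ _⟩
  rw [← Finset.card_univ, ← Finset.card_map e, ← hcover,
    hM.card_biUnion fun p => card_eq_two_of_mem_involutionPairs hfix]

end InvolutionPairs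

namespace ZMod

variable {q : ℕ}

/-- Round `i` of the classical round-robin schedule on `ZMod q ∪ {∞}`, with `none` as `∞`. -/
def roundRobin (i : ZMod q) : Option (ZMod q) → Option (ZMod q)
  | none => some i
  | some a => if a = i then none else some (2 * i - a)

theorem roundRobin_involutive (i : ZMod q) : Function.Involutive (roundRobin i) := by
  rintro (_ | a)
  · simp [roundRobin]
  · by_cases ha : a = i
    · simp [roundRobin, ha]
    · have : 2 * i - a ≠ i := fun h => ha (by linear_combination -h)
      simp [roundRobin, ha, this]

theorem isUnit_two_of_odd (hq : Odd q) : IsUnit (2 : ZMod q) := by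
  simpa using (ZMod.unitOfCoprime 2 (Nat.coprime_two_left.2 hq)).isUnit

theorem roundRobin_ne (hq : Odd q) (i : ZMod q) (v : Option (ZMod q)) : roundRobin i v ≠ v := by
  rcases v with _ | a
  · simp [roundRobin]
  · by_cases ha : a = i
    · simp [roundRobin, ha]
    · simp only [roundRobin, ha, if_false, ne_eq, Option.some.injEq]
      exact fun h => ha ((isUnit_two_of_odd hq).mul_left_cancel (by linear_combination h)).symm

theorem eq_of_roundRobin_eq (hq : Odd q) {i j : ZMod q} {v : Option (ZMod q)}
    (h : roundRobin i v = roundRobin j v) : i = j := by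
  rcases v with _ | a
  · simpa [roundRobin] using h
  · simp only [roundRobin] at h
    split_ifs at h with ha hb hb
    · exact ha.symm.trans hb
    · exact (isUnit_two_of_odd hq).mul_left_cancel (by linear_combination Option.some.inj h)

end ZMod

section OneFactorization

variable {α : Type*} [DecidableEq α]

theorem disjoint_involutionPairs_roundRobin {q : ℕ} [NeZero q] (hq : Odd q)
    (e : Option (ZMod q) ↪ α) {i j : ZMod q} (hij : i ≠ j) :
    Disjoint (involutionPairs e (ZMod.roundRobin i)) (involutionPairs e (ZMod.roundRobin j)) := by
  have hsame : ∀ u, ({e u, e (ZMod.roundRobin i u)} : Finset α) =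
      {e u, e (ZMod.roundRobin j u)} → False := fun u h => by
    have := (mem_pair_embedding_iff e).1 (h ▸ Finset.mem_insert_of_mem (Finset.mem_singleton_self
      (e (ZMod.roundRobin j u))))
    rcases this with h' | h'
    · exact ZMod.roundRobin_ne hq j u h'
    · exact hij (ZMod.eq_of_roundRobin_eq hq h').symm
  refine Finset.disjoint_left.2 fun p hpi hpj => ?_
  obtain ⟨v, -, rfl⟩ := Finset.mem_image.1 hpi
  obtain ⟨w, -, hw⟩ := Finset.mem_image.1 hpj
  rcases (mem_pair_embedding_iff e).1 (hw ▸ Finset.mem_insert_self (e w) _) with rfl | rfl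
  · exact hsame w hw.symm
  · exact hsame _ (((pair_embedding_eq_iff e (ZMod.roundRobin_involutive i)).2
      (Or.inr rfl)).trans hw.symm)

theorem exists_perfectMatchings_pairwiseDisjoint {U : Finset α} {k : ℕ} (hk : 0 < k)
    (hU : U.card = 2 * k) :
    ∃ P : ℕ → Finset (Finset α),
      (∀ i, IsMatchingIn (P i) U ∧ P i ⊆ U.powersetCard 2 ∧ (P i).card = k) ∧
      ((Finset.range (2 * k - 1) : Set ℕ).PairwiseDisjoint P) := by
  set q := 2 * k - 1 with hqk
  have hq : Odd q := ⟨k - 1, by omega⟩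
  have : NeZero q := ⟨hq.pos.ne'⟩
  have hcard : Fintype.card (Option (ZMod q)) = Fintype.card U := by
    rw [Fintype.card_option, ZMod.card, Fintype.card_coe, hU]
    omega
  set e : Option (ZMod q) ↪ α :=
    (Fintype.equivOfCardEq hcard).toEmbedding.trans (Function.Embedding.subtype _)
  have he : Finset.univ.map e ⊆ U := fun a ha => by
    obtain ⟨v, -, rfl⟩ := Finset.mem_map.1 ha
    exact (Fintype.equivOfCardEq hcard v).2
  refine ⟨fun i => involutionPairs e (ZMod.roundRobin (i : ZMod q)), fun i => ?_, ?_⟩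
  · have hτ := ZMod.roundRobin_involutive (i : ZMod q)
    have hM := (isMatchingIn_involutionPairs (e := e) hτ).mono he
    have h2 := two_mul_card_involutionPairs (e := e) hτ (ZMod.roundRobin_ne hq _)
    rw [Fintype.card_option, ZMod.card] at h2
    refine ⟨hM, fun p hp => Finset.mem_powersetCard.2 ⟨(hM.2 p hp).2,
      card_eq_two_of_mem_involutionPairs (ZMod.roundRobin_ne hq _) hp⟩, by beta_reduce; omega⟩
  · intro i hi j hj hij
    refine disjoint_involutionPairs_roundRobin hq e fun h => hij ?_
    rw [ZMod.natCast_eq_natCast_iff'] at h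
    simp only [Finset.coe_range, Set.mem_Iio] at hi hj
    rwa [Nat.mod_eq_of_lt hi, Nat.mod_eq_of_lt hj] at h

theorem mul_le_sum_powersetCard_two {U : Finset α} {k K : ℕ} (hk : 0 < k) (hU : U.card = 2 * k)
    (g : Finset α → ℕ)
    (hg : ∀ P, IsMatchingIn P U → P ⊆ U.powersetCard 2 → P.card = k → K ≤ ∑ p ∈ P, g p) :
    (2 * k - 1) * K ≤ ∑ p ∈ U.powersetCard 2, g p := by
  obtain ⟨P, hP, hdisj⟩ := exists_perfectMatchings_pairwiseDisjoint hk hU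
  calc (2 * k - 1) * K = ∑ _i ∈ Finset.range (2 * k - 1), K := by simp
    _ ≤ ∑ i ∈ Finset.range (2 * k - 1), ∑ p ∈ P i, g p :=
        Finset.sum_le_sum fun i _ => hg _ (hP i).1 (hP i).2.1 (hP i).2.2
    _ = ∑ p ∈ (Finset.range (2 * k - 1)).biUnion P, g p := (Finset.sum_biUnion hdisj).symm
    _ ≤ ∑ p ∈ U.powersetCard 2, g p :=
        Finset.sum_le_sum_of_subset (Finset.biUnion_subset.2 fun i _ => (hP i).2.1)

end OneFactorization

def missingCount (F : Finset (Finset ℕ)) (Y T : Finset ℕ) : ℕ :=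
  ∑ p ∈ T.powersetCard 2, (Y.filter fun y => insert y p ∉ F).card

theorem missingCount_eq_sum_singleton (F : Finset (Finset ℕ)) (Y T : Finset ℕ) :
    missingCount F Y T = ∑ y ∈ Y, missingCount F {y} T := by
  simp only [missingCount, Finset.card_filter, Finset.sum_singleton]
  exact Finset.sum_comm

theorem missingCount_singleton (F : Finset (Finset ℕ)) (x : ℕ) (T : Finset ℕ) :
    missingCount F {x} T = ((T.powersetCard 2).filter fun Q => insert x Q ∉ F).card := by
  simp only [missingCount, Finset.card_filter, Finset.sum_singleton]

theorem yF_eq_card_sdiff (n : ℕ) (F : Finset (Finset ℕ)) (k : ℕ) :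
    yF n F k = ((ground n).powersetCard k \ F).card := by
  rw [yF, layer, Finset.card_sdiff, Finset.card_powersetCard, ground, Nat.card_Icc,
    Nat.add_sub_cancel]

theorem missingCount_le_yF {n : ℕ} {F : Finset (Finset ℕ)} {Y T : Finset ℕ}
    (hY : Y ⊆ ground n) (hT : T ⊆ ground n) (hYT : Disjoint Y T) :
    missingCount F Y T ≤ yF n F 3 := by
  have hprod : missingCount F Y T =
      ((Y ×ˢ T.powersetCard 2).filter fun b => insert b.1 b.2 ∉ F).card := by
    simp only [missingCount, Finset.card_filter, Finset.sum_product_right]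
  have hmem : ∀ b ∈ (Y ×ˢ T.powersetCard 2).filter fun b => insert b.1 b.2 ∉ F,
      b.1 ∈ Y ∧ b.2 ⊆ T ∧ b.2.card = 2 ∧ b.1 ∉ b.2 ∧ insert b.1 b.2 ∉ F := fun b hb => by
    simp only [Finset.mem_filter, Finset.mem_product, Finset.mem_powersetCard] at hb
    exact ⟨hb.1.1, hb.1.2.1, hb.1.2.2, fun h => Finset.disjoint_left.1 hYT hb.1.1 (hb.1.2.1 h),
      hb.2⟩
  rw [hprod, yF_eq_card_sdiff]
  refine Finset.card_le_card_of_injOn (fun b => insert b.1 b.2) (fun b hb => ?_) ?_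
  · obtain ⟨h1, h2, h3, h4, h5⟩ := hmem b hb
    simp only [Finset.coe_sdiff, Set.mem_sdiff, Finset.mem_coe, Finset.mem_powersetCard,
      Finset.insert_subset_iff]
    exact ⟨⟨⟨hY h1, h2.trans hT⟩, by rw [Finset.card_insert_of_notMem h4, h3]⟩, h5⟩
  · rintro ⟨y, p⟩ hb ⟨y', p'⟩ hb' h
    obtain ⟨hy, hp, -, hyp, -⟩ := hmem _ hb
    obtain ⟨hy', hp', -, -, -⟩ := hmem _ hb'
    have hpart : ∀ z ∈ Y, ∀ r ⊆ T, (insert z r).filter (· ∈ T) = r := fun z hz r hr => by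
      rw [Finset.filter_insert, if_neg (Finset.disjoint_left.1 hYT hz),
        Finset.filter_true_of_mem hr]
    have hpp : p = p' := by
      rw [← hpart y hy p hp, ← hpart y' hy' p' hp']
      exact congrArg _ h
    subst hpp
    simp only at h hyp
    rw [(Finset.insert_inj hyp).1 h]

section Counting

variable {F : Finset (Finset ℕ)} {Lo V T : Finset ℕ} {x h : ℕ} {Mx Mt : Finset (Finset ℕ)}
  (hLoV : Disjoint Lo V) (hLoT : Disjoint Lo T)
  (hVT : Disjoint V T) (hx : x ∈ Lo) (hMx : IsMatchingIn Mx (Lo.erase x))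
  (hMx2 : ∀ A ∈ Mx, A.card = 2) (hMxF : Mx ⊆ F) (hMt : IsMatchingIn Mt V) (hMtF : Mt ⊆ F)
  (hν : matchingNumber F < Mx.card + Mt.card + h + 1)
include hLoV hLoT hVT hx hMx hMx2 hMxF hMt hMtF hν

theorem two_mul_card_le_sum_card_filter (hh : 0 < h) (hhMx : h ≤ Mx.card)
    {Q : Finset ℕ} (hQT : Q ⊆ T) (hQF : insert x Q ∈ F) {P : Finset (Finset ℕ)}
    (hP : IsMatchingIn P (T \ Q)) (hPc : P.card = 2 * h) :
    2 * Mx.card ≤ ∑ p ∈ P, ((Lo.erase x).filter fun y => insert y p ∉ F).card := by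
  set f : Finset ℕ → ℕ := fun A => ∑ p ∈ P, (A.filter fun y => insert y p ∉ F).card
  have hsum : ∀ R ⊆ Mx,
      ∑ A ∈ R, f A = ∑ p ∈ P, ((R.biUnion id).filter fun y => insert y p ∉ F).card :=
    fun R hR => by
      rw [Finset.sum_comm]
      exact Finset.sum_congr rfl fun p _ => (hMx.subset hR).sum_card_filter _
  -- `h` pairs of `Mx` matched into `P` would complete an `s`-matching
  have hblock : ∀ R ⊆ Mx, R.card = h → 2 * h ≤ ∑ A ∈ R, f A := by
    intro R hR hRc
    by_contra! hlt
    have hW : (R.biUnion id).card = 2 * h := by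
      rw [(hMx.subset hR).card_biUnion fun A hA => hMx2 A (hR hA), hRc]
    rw [hsum R hR] at hlt
    obtain ⟨σ, hσ, hσW⟩ := exists_injOn_of_sum_card_filter_not_lt
      (fun p y => insert y p ∈ F) (hPc.trans hW.symm).le (hW ▸ hlt)
    have := card_add_le_matchingNumber hLoV hLoT hVT hx hMx hMxF hR hMt hMtF hQT hQF hP hσ
      (fun p hp => (hσW p hp).1) fun p hp => (hσW p hp).2
    omega
  obtain ⟨R, hRMx, hRc, hRavg⟩ := Mx.exists_subset_card_eq_sum_mul_le f hhMx
  have h2 := hblock R hRMx hRc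
  calc 2 * Mx.card ≤ ∑ A ∈ Mx, f A := by nlinarith
    _ = ∑ p ∈ P, ((Mx.biUnion id).filter fun y => insert y p ∉ F).card := hsum Mx subset_rfl
    _ ≤ _ := Finset.sum_le_sum fun p _ =>
        Finset.card_le_card (Finset.filter_subset_filter _ hMx.biUnion_subset)

theorem card_filter_mem_mul_le (hhMx : h ≤ Mx.card) (hT : T.card = 4 * h + 2) :
    ((T.powersetCard 2).filter fun Q => insert x Q ∈ F).card * (2 * Mx.card) ≤
      2 * h * missingCount F (Lo.erase x) T := by
  rcases h.eq_zero_or_pos with rfl | hh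
  -- for `h = 0` the matching argument alone rules out every pair `Q`
  · suffices ((T.powersetCard 2).filter fun Q => insert x Q ∈ F) = ∅ by simp [this]
    refine Finset.filter_eq_empty_iff.2 fun Q hQ hQF => ?_
    have := card_add_le_matchingNumber (R := ∅) (P := ∅) (σ := fun _ => x) hLoV hLoT hVT hx hMx
      hMxF (Finset.empty_subset _) hMt hMtF (Finset.mem_powersetCard.1 hQ).1 hQF
      ⟨by simp, by simp⟩ (by simp) (by simp) (by simp)
    simp only [Finset.card_empty] at this
    omega
  set g : Finset ℕ → ℕ := fun p => ((Lo.erase x).filter fun y => insert y p ∉ F).card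
  have hgood : ∀ Q ∈ (T.powersetCard 2).filter fun Q => insert x Q ∈ F,
      (4 * h - 1) * (2 * Mx.card) ≤ ∑ p ∈ (T \ Q).powersetCard 2, g p := by
    intro Q hQ
    obtain ⟨hQ, hQF⟩ := Finset.mem_filter.1 hQ
    obtain ⟨hQT, hQ2⟩ := Finset.mem_powersetCard.1 hQ
    have hTQ : (T \ Q).card = 2 * (2 * h) := by rw [Finset.card_sdiff_of_subset hQT]; omega
    have := mul_le_sum_powersetCard_two (by omega) hTQ g fun P hP _ hPc =>
      two_mul_card_le_sum_card_filter hLoV hLoT hVT hx hMx hMx2 hMxF hMt hMtF hν hh hhMx hQT hQF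
        hP hPc
    rwa [show 2 * (2 * h) - 1 = 4 * h - 1 by omega] at this
  have hdisjoint : ∀ p ∈ T.powersetCard 2,
      ((T \ p).powersetCard 2).card = 2 * h * (4 * h - 1) := by
    intro p hp
    obtain ⟨hpT, hp2⟩ := Finset.mem_powersetCard.1 hp
    rw [Finset.card_powersetCard, Finset.card_sdiff_of_subset hpT, hT, hp2, Nat.choose_two_right,
      show 4 * h + 2 - 2 = 4 * h by omega]
    exact Nat.div_eq_of_eq_mul_left two_pos (by ring)
  have hcount := calc
    ((T.powersetCard 2).filter fun Q => insert x Q ∈ F).card * ((4 * h - 1) * (2 * Mx.card))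
        ≤ ∑ Q ∈ (T.powersetCard 2).filter (fun Q => insert x Q ∈ F),
            ∑ p ∈ (T \ Q).powersetCard 2, g p := Finset.card_nsmul_le_sum _ _ _ hgood
    _ ≤ ∑ Q ∈ T.powersetCard 2, ∑ p ∈ (T \ Q).powersetCard 2, g p :=
        Finset.sum_le_sum_of_subset (Finset.filter_subset _ _)
    _ = ∑ p ∈ T.powersetCard 2, ∑ _Q ∈ (T \ p).powersetCard 2, g p := by
        refine Finset.sum_comm' fun Q p => ?_
        simp only [Finset.mem_powersetCard, Finset.subset_sdiff]
        grind
    _ = (4 * h - 1) * (2 * h * missingCount F (Lo.erase x) T) := by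
        rw [missingCount, Finset.mul_sum, Finset.mul_sum]
        refine Finset.sum_congr rfl fun p hp => ?_
        rw [Finset.sum_const, hdisjoint p hp, smul_eq_mul]
        ring
  rw [mul_left_comm] at hcount
  exact Nat.le_of_mul_le_mul_left hcount (by omega)

theorem choose_mul_le_missingCount (hhMx : h ≤ Mx.card) (hT : T.card = 4 * h + 2) :
    (4 * h + 2).choose 2 * (2 * Mx.card) ≤
      2 * h * missingCount F Lo T + 2 * (Mx.card - h) * missingCount F {x} T := by
  have hgood := card_filter_mem_mul_le hLoV hLoT hVT hx hMx hMx2 hMxF hMt hMtF hν hhMx hT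
  have hsplit := Finset.card_filter_add_card_filter_not (s := T.powersetCard 2)
    (fun Q => insert x Q ∈ F)
  rw [← missingCount_singleton, Finset.card_powersetCard, hT] at hsplit
  have hLo : missingCount F Lo T = missingCount F {x} T + missingCount F (Lo.erase x) T := by
    rw [missingCount_eq_sum_singleton F Lo, ← Finset.add_sum_erase _ _ hx,
      missingCount_eq_sum_singleton F (Lo.erase x)]
  obtain ⟨k, hk⟩ := Nat.exists_eq_add_of_le hhMx
  rw [hk] at hgood ⊢
  rw [Nat.add_sub_cancel_left, hLo, ← hsplit]
  nlinarith

end Counting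

theorem card_mul_le_missingCount_mul {F : Finset (Finset ℕ)} {X Lo T : Finset ℕ} (hX : X ⊆ Lo)
    {a b c : ℕ} (h : ∀ x ∈ X, a ≤ b * missingCount F Lo T + c * missingCount F {x} T) :
    X.card * a ≤ missingCount F Lo T * (b * X.card + c) := by
  have hsub : ∑ x ∈ X, missingCount F {x} T ≤ missingCount F Lo T := by
    rw [missingCount_eq_sum_singleton F Lo]
    exact Finset.sum_le_sum_of_subset hX
  calc X.card * a = ∑ _x ∈ X, a := by simp
    _ ≤ ∑ x ∈ X, (b * missingCount F Lo T + c * missingCount F {x} T) := Finset.sum_le_sum h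
    _ = X.card * (b * missingCount F Lo T) + c * ∑ x ∈ X, missingCount F {x} T := by
        rw [Finset.sum_add_distrib, Finset.sum_const, smul_eq_mul, Finset.mul_sum]
    _ ≤ missingCount F Lo T * (b * X.card + c) := by nlinarith

theorem mul_one_sub_div_le_of_mul_le {a C u v N : ℕ} (hv : 0 < v) (ha : a ≤ u + v + 1)
    (h : a * C * (v + u) ≤ N * (u * a + v)) :
    (a : ℝ) * C * (1 - (((v + u) * u : ℕ) : ℝ) / ((u * a + v : ℕ) : ℝ)) ≤ N := by
  have hD : (0 : ℝ) < ((u * a + v : ℕ) : ℝ) := by positivity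
  rw [one_sub_div hD.ne', ← mul_div_assoc, div_le_iff₀ hD]
  have h' : (a : ℝ) * C * (v + u) ≤ N * (u * a + v) := by exact_mod_cast h
  have ha' : (a : ℝ) ≤ u + v + 1 := by exact_mod_cast ha
  push_cast
  nlinarith [mul_le_mul_of_nonneg_left (by nlinarith : (u * a + v - (v + u) * u : ℝ) ≤ v + u)
    (by positivity : (0 : ℝ) ≤ a * C)]

theorem stmt_13_general (n s l c d : ℕ) (hl0 : 0 < l)
    (hcl : c + l = s) (hn : n = 2 * l + 3 * c)
    (F : Finset (Finset ℕ))
    (hnu : matchingNumber F < s)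
    (hd : Even d) (hd2 : 2 ≤ d) (hdc : d ≤ c + 1)
    (X : Finset ℕ) (hX : X ⊆ Finset.Icc 1 (2 * l + d - 1))
    (hXm : ∀ x ∈ X, l + (d - 2) / 2 ≤
      matchingNumber (F ∩ ((Finset.Icc 1 (2 * l + d - 1)).erase x).powersetCard 2))
    (hm : c + 1 - d ≤ matchingNumber (F ∩ (Finset.Icc (2 * l + d) n).powersetCard 3)) :
    (X.card : ℝ) * (Nat.choose (2 * d - 2) 2 : ℝ) *
        (1 - (((2 * l + d - 2) * (d - 2) : ℕ) : ℝ) / (((d - 2) * X.card + 2 * l : ℕ) : ℝ))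
      ≤ (yF n F 3 : ℝ) := by
  obtain ⟨h, rfl⟩ : ∃ h, d = 2 * h + 2 := by
    obtain ⟨k, hk⟩ := hd
    exact ⟨k - 1, by omega⟩
  obtain ⟨Mt, hMtF, hMt, hMt3, hMtc⟩ := exists_isMatchingIn_of_le_matchingNumber three_pos hm
  set Lo := Finset.Icc 1 (2 * l + (2 * h + 2) - 1)
  set T := Finset.Icc (2 * l + (2 * h + 2)) n \ Mt.biUnion id
  have hLoHi : Disjoint Lo (Finset.Icc (2 * l + (2 * h + 2)) n) :=
    Finset.disjoint_left.2 fun a ha hb => by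
      simp only [Lo, Finset.mem_Icc] at ha hb
      omega
  have hLoT : Disjoint Lo T := hLoHi.mono_right Finset.sdiff_subset
  have hT : T.card = 4 * h + 2 := by
    rw [Finset.card_sdiff_of_subset hMt.biUnion_subset, hMt.card_biUnion hMt3, hMtc, Nat.card_Icc]
    omega
  have hper : ∀ x ∈ X, (4 * h + 2).choose 2 * (2 * (l + h)) ≤
      2 * h * missingCount F Lo T + 2 * l * missingCount F {x} T := by
    intro x hxX
    obtain ⟨Mx, hMxF, hMx, hMx2, hMxc⟩ :=
      exists_isMatchingIn_of_le_matchingNumber two_pos (hXm x hxX)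
    have := choose_mul_le_missingCount (hLoHi.mono_right hMt.biUnion_subset) hLoT
      Finset.disjoint_sdiff (hX hxX) hMx hMx2 hMxF hMt.self_biUnion hMtF (by omega) (by omega) hT
    rwa [hMxc, show l + (2 * h + 2 - 2) / 2 = l + h by omega, Nat.add_sub_cancel] at this
  have hN : missingCount F Lo T ≤ yF n F 3 := missingCount_le_yF
    (Finset.Icc_subset_Icc le_rfl (by omega)) (Finset.sdiff_subset.trans
      (Finset.Icc_subset_Icc (by omega) le_rfl)) hLoT
  rw [show 2 * l + (2 * h + 2) - 2 = 2 * l + 2 * h by omega, show 2 * h + 2 - 2 = 2 * h by omega,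
    show 2 * (2 * h + 2) - 2 = 4 * h + 2 by omega]
  refine (mul_one_sub_div_le_of_mul_le (by omega) ?_ ?_).trans (by exact_mod_cast hN)
  · have := Finset.card_le_card hX
    rw [Nat.card_Icc] at this
    omega
  · have := card_mul_le_missingCount_mul hX hper
    linarith

theorem stmt_13 (n s l c d : ℕ) (hs0 : 0 < s) (hl0 : 0 < l) (hc0 : 0 < c)
    (hcl : c + l = s) (hn : n = 2 * l + 3 * c)
    (F : Finset (Finset ℕ)) (hF : ∀ A ∈ F, A ⊆ ground n) (hsh : IsShifted n F)
    (hnu : matchingNumber F < s)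
    (hd : Even d) (hd2 : 2 ≤ d) (hdc : d ≤ c + 1) (hdF : d ≤ dF l F)
    (X : Finset ℕ) (hX : X ⊆ Finset.Icc 1 (2 * l + d - 1))
    (hXm : ∀ x ∈ X, l + (d - 2) / 2 ≤
      matchingNumber (F ∩ ((Finset.Icc 1 (2 * l + d - 1)).erase x).powersetCard 2))
    (hm : c + 1 - d ≤ matchingNumber (F ∩ (Finset.Icc (2 * l + d) n).powersetCard 3)) :
    (X.card : ℝ) * (Nat.choose (2 * d - 2) 2 : ℝ) *
        (1 - (((2 * l + d - 2) * (d - 2) : ℕ) : ℝ) / (((d - 2) * X.card + 2 * l : ℕ) : ℝ))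
      ≤ (yF n F 3 : ℝ) :=
  stmt_13_general n s l c d hl0 hcl hn F hnu hd hd2 hdc X hX hXm hm
end

section
/- Let s,ℓ be positive integers with n=3s-ℓ, and let F ⊆ 2^[n] be a shifted family with ν(F) < s. Let d = d(F) ≥ 2 be even. Then for every x ∈ [2, 2ℓ+d−1] the family F ∩ (([2ℓ+d−1] \ {x}) choose 2) contains an (ℓ+(d−2)/2)-matching. -/
/-!
As `d - 1` is odd and below `d(F)`, the pairs `{1, m}` and `{i, m + 2 - i}` (`3 ≤ i ≤ c`) lie
in `F`, where `m = 2ℓ + d - 1 = 2c - 1`. By shiftedness `F` then contains every pair `{a, b}`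
with `a + b ≤ m + 2` and `b < m`, and every `{1, b}` with `b ≤ m`. Listing `[m] \ {x}` as
`y₁ < ⋯ < y_{2c-2}`, the pairs `{y_j, y_{2c-1-j}}` (`j < c`) are of this kind because
`y_j ≤ j + 1`, and they form a matching of size `c - 1 = ℓ + (d - 2)/2`.
-/

open Finset

lemma shiftSet_pair_right {u v w : ℕ} (huv : u ≠ v) (hwu : w ≠ u) (hwv : w ≠ v) :
    shiftSet w v {u, v} = {w, u} := by
  have herase : ({u, v} : Finset ℕ).erase v = {u} := by
    rw [Finset.erase_insert_of_ne huv, Finset.erase_singleton, insert_empty_eq]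
  simp [shiftSet, herase, hwu, hwv]

namespace IsShifted

variable {n : ℕ} {F : Finset (Finset ℕ)}

lemma shiftSet_mem (hsh : IsShifted n F) {A : Finset ℕ} (hA : A ∈ F) {i j : ℕ}
    (hi : 1 ≤ i) (hij : i < j) (hjn : j ≤ n) : shiftSet i j A ∈ F := by
  rw [← hsh i j hi hij hjn]
  exact Finset.mem_union_left _ (Finset.mem_image_of_mem _ hA)

lemma pair_mem_of_le_right (hsh : IsShifted n F) {u v w : ℕ} (h : {u, v} ∈ F) (huv : u ≠ v)
    (hw : 1 ≤ w) (hwv : w ≤ v) (hvn : v ≤ n) (hwu : w ≠ u) : {u, w} ∈ F := by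
  rcases hwv.eq_or_lt with rfl | hwv
  · exact h
  · rw [Finset.pair_comm, ← shiftSet_pair_right huv hwu hwv.ne]
    exact hsh.shiftSet_mem h hw hwv hvn

lemma pair_mem_of_le (hsh : IsShifted n F) {a₀ b₀ a b : ℕ} (h : {a₀, b₀} ∈ F)
    (hab₀ : a₀ < b₀) (hb₀n : b₀ ≤ n) (ha : 1 ≤ a) (haa₀ : a ≤ a₀) (hab : a < b)
    (hbb₀ : b ≤ b₀) : {a, b} ∈ F := by
  by_cases hba₀ : b = a₀
  · subst hba₀
    rw [Finset.pair_comm]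
    exact hsh.pair_mem_of_le_right h hab₀.ne ha (by omega) hb₀n hab.ne
  · have h' : {b, a₀} ∈ F := by
      rw [Finset.pair_comm]
      exact hsh.pair_mem_of_le_right h hab₀.ne (by omega) hbb₀ hb₀n hba₀
    rw [Finset.pair_comm]
    exact hsh.pair_mem_of_le_right h' hba₀ ha haa₀ (by omega) hab.ne

/-- A pair `{2, b}` is dominated by `{3, m - 1}`, a pair `{a, b}` with `a ≥ 3` by
`{a, m + 2 - a}`. -/
lemma pair_mem_of_staircase (hsh : IsShifted n F) {m c : ℕ} (hmn : m ≤ n) (hmc : m = 2 * c - 1)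
    (h₁ : {1, m} ∈ F) (hmid : ∀ i, 3 ≤ i → i ≤ c → {i, m + 2 - i} ∈ F) {a b : ℕ}
    (ha : 1 ≤ a) (hab : a < b) (hb : (a = 1 ∧ b ≤ m) ∨ (2 ≤ a ∧ b < m ∧ a + b ≤ m + 2)) :
    {a, b} ∈ F := by
  rcases hb with ⟨rfl, hbm⟩ | ⟨ha₂, hbm, hsum⟩
  · exact hsh.pair_mem_of_le h₁ (by omega) hmn le_rfl le_rfl hab hbm
  · rcases Nat.lt_or_ge a 3 with ha₃ | ha₃
    · have h₃ := hmid 3 le_rfl (by omega)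
      exact hsh.pair_mem_of_le h₃ (by omega) (by omega) ha (by omega) hab (by omega)
    · exact hsh.pair_mem_of_le (hmid a ha₃ (by omega)) (by omega) (by omega) ha le_rfl hab
        (by omega)

end IsShifted

lemma card_le_matchingNumber_s14 {F M : Finset (Finset ℕ)} (hM : M ⊆ F)
    (hdisj : (M : Set (Finset ℕ)).Pairwise fun A B => Disjoint A B) :
    M.card ≤ matchingNumber F := by
  classical
  exact Finset.le_sup (f := Finset.card)
    (Finset.mem_filter.mpr ⟨Finset.mem_powerset.mpr hM, hdisj⟩)

lemma card_le_matchingNumber_of_pairs {F : Finset (Finset ℕ)} {I : Finset ℕ} {f g : ℕ → ℕ}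
    (hf : Set.InjOn f I) (hg : Set.InjOn g I) (hfg : ∀ i ∈ I, ∀ j ∈ I, f i ≠ g j)
    (hmem : ∀ j ∈ I, {f j, g j} ∈ F) : I.card ≤ matchingNumber F := by
  classical
  have hinj : Set.InjOn (fun j => ({f j, g j} : Finset ℕ)) I := by
    intro i hi j hj hij
    have hfi : f i ∈ ({f j, g j} : Finset ℕ) := by
      rw [← show ({f i, g i} : Finset ℕ) = {f j, g j} from hij]
      exact Finset.mem_insert_self _ _
    rcases Finset.mem_insert.mp hfi with h | h
    · exact hf hi hj h
    · exact absurd (Finset.mem_singleton.mp h) (hfg i hi j hj)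
  rw [← Finset.card_image_of_injOn hinj]
  refine card_le_matchingNumber_s14 (Finset.image_subset_iff.mpr hmem) ?_
  simp only [Finset.coe_image]
  rintro _ ⟨i, hi, rfl⟩ _ ⟨j, hj, rfl⟩ hne
  have hij : i ≠ j := fun h => hne (h ▸ rfl)
  rw [Finset.disjoint_left]
  intro a hai haj
  simp only [Finset.mem_insert, Finset.mem_singleton] at hai haj
  rcases hai with rfl | rfl <;> rcases haj with h | h
  · exact hij (hf hi hj h)
  · exact hfg i hi j hj h
  · exact hfg j hj i hi h.symm
  · exact hij (hg hi hj h)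

lemma le_matchingNumber_inter_powersetCard_two {F : Finset (Finset ℕ)} {m c x : ℕ}
    (hmc : m = 2 * c - 1) (hx : x ∈ Finset.Icc 2 m)
    (hF : ∀ a b : ℕ, 1 ≤ a → a < b → (a = 1 ∧ b ≤ m) ∨ (2 ≤ a ∧ b < m ∧ a + b ≤ m + 2) →
      {a, b} ∈ F) :
    c - 1 ≤ matchingNumber (F ∩ ((Finset.Icc 1 m).erase x).powersetCard 2) := by
  rw [Finset.mem_Icc] at hx
  -- `y j` is the `j`-th element of `[m] \ {x}`
  let y : ℕ → ℕ := fun k => if k < x then k else k + 1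
  have hcard : (Finset.Icc 1 (c - 1)).card = c - 1 := by simp
  rw [← hcard]
  refine card_le_matchingNumber_of_pairs (f := y) (g := fun j => y (m - j)) ?_ ?_ ?_ ?_
  · intro i hi j hj h
    simp only [y] at h
    split_ifs at h <;> omega
  · intro i hi j hj h
    simp only [Finset.coe_Icc, Set.mem_Icc, y] at hi hj h
    split_ifs at h <;> omega
  · intro i hi j hj
    simp only [Finset.mem_Icc, y] at hi hj ⊢
    split_ifs <;> omega
  · intro j hj
    simp only [Finset.mem_Icc] at hj
    refine Finset.mem_inter.mpr ⟨hF _ _ ?_ ?_ ?_, Finset.mem_powersetCard.mpr ⟨?_, ?_⟩⟩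
    · simp only [y]; split_ifs <;> omega
    · simp only [y]; split_ifs <;> omega
    · simp only [y]; split_ifs <;> omega
    · intro a ha
      simp only [Finset.mem_insert, Finset.mem_singleton] at ha
      simp only [Finset.mem_erase, Finset.mem_Icc]
      rcases ha with rfl | rfl <;> simp only [y] <;> split_ifs <;> omega
    · exact Finset.card_pair (by simp only [y]; split_ifs <;> omega)

lemma not_DCond_of_lt_dF {l d : ℕ} {F : Finset (Finset ℕ)} (h : d < dF l F) : ¬ DCond l F d :=
  Nat.notMem_of_lt_sInf h

lemma pairs_mem_of_not_DCond_of_odd {l d : ℕ} {F : Finset (Finset ℕ)} (hd : Odd d)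
    (h : ¬ DCond l F d) :
    {1, 2 * l + d} ∈ F ∧ ∀ i, 3 ≤ i → i ≤ l + (d + 1) / 2 → {i, 2 * l + d + 2 - i} ∈ F := by
  simp only [DCond, hd, true_and, not_or, not_exists, not_and, not_not, Finset.mem_Icc] at h
  exact ⟨h.2.1, fun i h₃ hi => h.2.2 i ⟨h₃, hi⟩⟩

theorem stmt_14_general (n l d : ℕ)
    (F : Finset (Finset ℕ)) (hF : ∀ A ∈ F, A ⊆ ground n) (hsh : IsShifted n F)
    (hdF : dF l F = d) (hd : Even d) (hd2 : 2 ≤ d) :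
    ∀ x ∈ Finset.Icc 2 (2 * l + d - 1),
      l + (d - 2) / 2 ≤
        matchingNumber (F ∩ ((Finset.Icc 1 (2 * l + d - 1)).erase x).powersetCard 2) := by
  intro x hx
  have hd0 : d % 2 = 0 := Nat.even_iff.mp hd
  have hodd : Odd (d - 1) := Nat.Even.sub_odd (by omega) hd odd_one
  obtain ⟨h₁, hmid⟩ :=
    pairs_mem_of_not_DCond_of_odd hodd (not_DCond_of_lt_dF (by omega : d - 1 < dF l F))
  have hd1 : 2 * l + (d - 1) = 2 * l + d - 1 := by omega
  rw [hd1] at h₁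
  have hmn : 2 * l + d - 1 ≤ n := (Finset.mem_Icc.mp (hF _ h₁ (by simp))).2
  have hc : l + (d - 2) / 2 = l + d / 2 - 1 := by omega
  rw [hc]
  refine le_matchingNumber_inter_powersetCard_two (c := l + d / 2) (by omega) hx
    fun a b ha hab hb => ?_
  refine hsh.pair_mem_of_staircase hmn (c := l + d / 2) (by omega) h₁ (fun i h₃ hi => ?_)
    ha hab hb
  have h := hmid i h₃ (by omega)
  rwa [show 2 * l + (d - 1) + 2 - i = 2 * l + d - 1 + 2 - i by omega] at h

theorem stmt_14 (n s l d : ℕ) (hs0 : 0 < s) (hl0 : 0 < l) (hn : n + l = 3 * s)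
    (F : Finset (Finset ℕ)) (hF : ∀ A ∈ F, A ⊆ ground n) (hsh : IsShifted n F)
    (hnu : matchingNumber F < s)
    (hdF : dF l F = d) (hd : Even d) (hd2 : 2 ≤ d) :
    ∀ x ∈ Finset.Icc 2 (2 * l + d - 1),
      l + (d - 2) / 2 ≤
        matchingNumber (F ∩ ((Finset.Icc 1 (2 * l + d - 1)).erase x).powersetCard 2) :=
  stmt_14_general n l d F hF hsh hdF hd hd2
end
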